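/- Let X be a non-commutative Corson countably compact space, let Y be a Hausdorff completely regular topological space, and let f : X → Y be a quotient map (a surjective continuous map such that a set is open in Y if and only if its preimage is open in X). Then Y is a non-commutative Corson countably compact space. -/

import Mathlib

open Filter Topology Set

universe u

section Defs

/-- A space is countably compact if every countable open cover has a finite subcover. -/
def CountablyCompact (X : Type u) [TopologicalSpace X] : Prop :=
  ∀ U : ℕ → Set X, (∀ n, IsOpen (U n)) → (⋃ n, U n) = Set.univ →
    ∃ t : Finset ℕ, (⋃ n ∈ t, U n) = Set.univ

variable {X : Type u} [TopologicalSpace X]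

/-- A retractional skeleton on a topological space `X`. -/
structure IsRetractionalSkeleton {Γ : Type u} [PartialOrder Γ] (r : Γ → X → X) : Prop where
  nonempty : Nonempty Γ
  directed : ∀ s t : Γ, ∃ w, s ≤ w ∧ t ≤ w
  continuous : ∀ s, Continuous (r s)
  retraction : ∀ s, r s ∘ r s = r s
  compact_range : ∀ s, IsCompact (Set.range (r s))
  metrizable_range : ∀ s, TopologicalSpace.MetrizableSpace (Set.range (r s))
  comp_eq_of_le : ∀ s t, s ≤ t → r t ∘ r s = r s ∧ r s ∘ r t = r s
  seq_sup : ∀ u : ℕ → Γ, Monotone u →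
    ∃ t, IsLUB (Set.range u) t ∧
      ∀ x, Filter.Tendsto (fun n => r (u n) x) Filter.atTop (nhds (r t x))
  tendsto_id : ∀ x, Filter.Tendsto (fun s => r s x) Filter.atTop (nhds x)

/-- `X` admits a retractional skeleton (non-commutative Valdivia when `X` is compact). -/
def HasRetractionalSkeleton (X : Type u) [TopologicalSpace X] : Prop :=
  ∃ (Γ : Type u) (_ : PartialOrder Γ) (r : Γ → X → X), IsRetractionalSkeleton r

/-- `X` admits a full retractional skeleton. -/
def HasFullRetractionalSkeleton (X : Type u) [TopologicalSpace X] : Prop :=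
  ∃ (Γ : Type u) (_ : PartialOrder Γ) (r : Γ → X → X),
    IsRetractionalSkeleton r ∧ ∀ x : X, ∃ s, x ∈ Set.range (r s)

/-- A non-commutative Corson countably compact space. -/
def IsNCCorson (X : Type u) [TopologicalSpace X] : Prop :=
  CountablyCompact X ∧ HasFullRetractionalSkeleton X

/-- A weakly non-commutative Corson countably compact space: a countably compact
continuous image of a non-commutative Corson countably compact space. -/
def IsWeaklyNCCorson (Y : Type u) [TopologicalSpace Y] : Prop :=
  CountablyCompact Y ∧
  ∃ (X : Type u) (_ : TopologicalSpace X) (_ : T2Space X) (_ : CompletelyRegularSpace X),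
    IsNCCorson X ∧ ∃ f : X → Y, Continuous f ∧ Function.Surjective f

/-- A weakly non-commutative Valdivia compact space: a compact space with a dense
countably compact subspace which is weakly non-commutative Corson. -/
def IsWeaklyNCValdivia (K : Type u) [TopologicalSpace K] : Prop :=
  CompactSpace K ∧ ∃ D : Set K, Dense D ∧ IsWeaklyNCCorson ↥D

end Defs


/-!
A retraction `r t` of the skeleton descends to `Y` exactly when `r t × r t` maps the closed set
`E = {(x, x') | f x = f x'}` into itself. For a closed set `F` in a space with a full skeleton
such indices are cofinal: `range (r s)` is separable, so countably many points of `F` determine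
`r s '' F` up to closure; absorbing them into the range of the next index along an increasing
sequence with supremum `t`, compactness of `F ∩ range (r t)` forces `r t '' F ⊆ F`. Applied to
`E` and the product skeleton on `X × X`, the descended retractions form a full skeleton on `Y`.
Their ranges are continuous images of compact metrizable spaces in a Hausdorff space, hence
metrizable.
-/

open TopologicalSpace in
theorem Function.Surjective.secondCountableTopology_of_compactSpace {K Y : Type*}
    [TopologicalSpace K] [TopologicalSpace Y] [CompactSpace K] [SecondCountableTopology K]
    [T2Space Y] {h : K → Y} (hs : Function.Surjective h) (hc : Continuous h) :
    SecondCountableTopology Y := by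
  obtain ⟨B, hBc, -, hB⟩ := exists_countable_basis K
  refine IsTopologicalBasis.secondCountableTopology (b := (fun F => kernImage h (⋃₀ F)) ''
    {F | F.Finite ∧ F ⊆ B}) ?_ ((countable_ofPred_finite_subset hBc).image _)
  refine isTopologicalBasis_of_isOpen_of_nhds ?_ fun y V hyV hV => ?_
  · rintro _ ⟨F, ⟨-, hFB⟩, rfl⟩
    exact isClosedMap_iff_kernImage.1 hc.isClosedMap
      (isOpen_sUnion fun b hb => hB.isOpen (hFB hb))
  have hcover : h ⁻¹' {y} ⊆ ⋃ b ∈ {b ∈ B | b ⊆ h ⁻¹' V}, b := fun x hx => by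
    obtain ⟨b, hbB, hxb, hbV⟩ :=
      hB.exists_subset_of_mem_open (show h x ∈ V from hx ▸ hyV) (hV.preimage hc)
    exact mem_biUnion ⟨hbB, hbV⟩ hxb
  obtain ⟨F, hFB, hFfin, hyF⟩ :=
    (isClosed_singleton.preimage hc).isCompact.elim_finite_subcover_image
      (fun b hb => hB.isOpen hb.1) hcover
  refine ⟨_, ⟨F, ⟨hFfin, fun b hb => (hFB hb).1⟩, rfl⟩, fun x hx => ?_, fun z hz => ?_⟩
  · exact sUnion_eq_biUnion ▸ hyF hx
  · obtain ⟨x, rfl⟩ := hs z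
    obtain ⟨b, hbF, hxb⟩ := hz rfl
    exact (hFB hbF).2 hxb

open TopologicalSpace in
theorem IsCompact.metrizableSpace_image {X Y : Type*} [TopologicalSpace X] [TopologicalSpace Y]
    [T2Space Y] {s : Set X} (hs : IsCompact s) [MetrizableSpace s] {f : X → Y}
    (hf : Continuous f) : MetrizableSpace (f '' s) := by
  have : CompactSpace s := isCompact_iff_compactSpace.1 hs
  let := metrizableSpaceMetric s
  have : CompactSpace (f '' s) := isCompact_iff_compactSpace.1 (hs.image hf)
  have := imageFactorization_surjective.secondCountableTopology_of_compactSpace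
    (hf.restrict (mapsTo_image f s))
  infer_instance

namespace IsRetractionalSkeleton

variable {X : Type u} [TopologicalSpace X] {Γ : Type u} [PartialOrder Γ] {r : Γ → X → X}

theorem apply_apply_of_le (hr : IsRetractionalSkeleton r) {s t : Γ} (hst : s ≤ t) (x : X) :
    r s (r t x) = r s x :=
  congrFun (hr.comp_eq_of_le s t hst).2 x

theorem apply_apply_of_le' (hr : IsRetractionalSkeleton r) {s t : Γ} (hst : s ≤ t) (x : X) :
    r t (r s x) = r s x :=
  congrFun (hr.comp_eq_of_le s t hst).1 x

theorem apply_eq_self_of_mem_range (hr : IsRetractionalSkeleton r) {s : Γ} {x : X}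
    (hx : x ∈ range (r s)) : r s x = x := by
  obtain ⟨y, rfl⟩ := hx
  exact congrFun (hr.retraction s) y

theorem range_mono (hr : IsRetractionalSkeleton r) {s t : Γ} (hst : s ≤ t) :
    range (r s) ⊆ range (r t) := by
  rintro _ ⟨x, rfl⟩
  exact ⟨r s x, hr.apply_apply_of_le' hst x⟩

theorem exists_ge_forall_le (hr : IsRetractionalSkeleton r) (s : Γ) (σ : ℕ → Γ) :
    ∃ t, s ≤ t ∧ ∀ n, σ n ≤ t := by
  choose ub hub₁ hub₂ using hr.directed
  let v : ℕ → Γ := fun n => Nat.rec s (fun k w => ub w (σ k)) n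
  obtain ⟨t, ht, -⟩ := hr.seq_sup v (monotone_nat_of_le_succ fun n => hub₁ _ _)
  exact ⟨t, ht.1 ⟨0, rfl⟩, fun n => (hub₂ _ _).trans (ht.1 ⟨n + 1, rfl⟩)⟩

theorem exists_ge_subset_range (hr : IsRetractionalSkeleton r)
    (hfull : ∀ x, ∃ s, x ∈ range (r s)) {C : Set X} (hC : C.Countable) (s : Γ) :
    ∃ t, s ≤ t ∧ C ⊆ range (r t) := by
  rcases C.eq_empty_or_nonempty with rfl | hne
  · exact ⟨s, le_rfl, empty_subset _⟩
  obtain ⟨c, rfl⟩ := hC.exists_eq_range hne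
  choose σ hσ using fun n => hfull (c n)
  obtain ⟨t, hst, ht⟩ := hr.exists_ge_forall_le s σ
  exact ⟨t, hst, range_subset_iff.2 fun n => hr.range_mono (ht n) (hσ n)⟩

open TopologicalSpace in
theorem exists_countable_subset_image_subset_closure (hr : IsRetractionalSkeleton r) (s : Γ)
    (F : Set X) : ∃ C ⊆ F, C.Countable ∧ r s '' F ⊆ closure (r s '' C) := by
  have := hr.metrizable_range s
  have : CompactSpace (range (r s)) := isCompact_iff_compactSpace.1 (hr.compact_range s)
  let := metrizableSpaceMetric (range (r s))
  let g : X → range (r s) := rangeFactorization (r s)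
  obtain ⟨D, hDF, hDc, hFD⟩ :=
    (IsSeparable.of_separableSpace (g '' F)).exists_countable_dense_subset
  obtain ⟨C, hCF, hCD⟩ := SurjOn.exists_bijOn_subset hDF
  refine ⟨C, hCF, hCD.mapsTo.countable_of_injOn hCD.injOn hDc, ?_⟩
  calc r s '' F = Subtype.val '' (g '' F) := by rw [image_image]; rfl
    _ ⊆ Subtype.val '' closure D := image_mono hFD
    _ ⊆ closure (Subtype.val '' D) := image_closure_subset_closure_image continuous_subtype_val
    _ = closure (r s '' C) := by rw [← hCD.image_eq, image_image]; rfl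

theorem exists_ge_mapsTo [T2Space X] (hr : IsRetractionalSkeleton r)
    (hfull : ∀ x, ∃ s, x ∈ range (r s)) {F : Set X} (hF : IsClosed F) (s : Γ) :
    ∃ t, s ≤ t ∧ MapsTo (r t) F F := by
  choose C hCF hCc hFC using fun s => hr.exists_countable_subset_image_subset_closure s F
  choose next hnext hCnext using fun s => hr.exists_ge_subset_range hfull (hCc s) s
  let u : ℕ → Γ := fun n => next^[n] s
  have hu_succ (n : ℕ) : u (n + 1) = next (u n) := Function.iterate_succ_apply' ..
  have hu : Monotone u := monotone_nat_of_le_succ fun n => hu_succ n ▸ hnext _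
  obtain ⟨t, ht, hlim⟩ := hr.seq_sup u hu
  have hut (n : ℕ) : u n ≤ t := ht.1 ⟨n, rfl⟩
  refine ⟨t, hut 0, fun x hx => ?_⟩
  let L := F ∩ range (r t)
  have hL : IsCompact L := (hr.compact_range t).inter_left hF
  have hCL (n : ℕ) : C (u n) ⊆ L :=
    subset_inter (hCF _) ((hCnext _).trans (hu_succ n ▸ hr.range_mono (hut (n + 1))))
  -- the countable sets `C (u n)` now lie in `range (r t)`, so this closure is a compact image
  have hxL (n : ℕ) : r (u n) x ∈ r (u n) '' L := by
    rw [← (hL.image (hr.continuous _)).isClosed.closure_eq]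
    exact closure_mono (image_mono (hCL n)) (hFC _ (mem_image_of_mem _ hx))
  let K (n : ℕ) : Set X := L ∩ {c | r (u n) c = r (u n) x}
  have hK_succ (n : ℕ) : K (n + 1) ⊆ K n := fun c ⟨hcL, hc⟩ => ⟨hcL, by
    show r (u n) c = r (u n) x
    rw [← hr.apply_apply_of_le (hu n.le_succ), hc, hr.apply_apply_of_le (hu n.le_succ)]⟩
  have hK_closed (n : ℕ) : IsClosed (K n) :=
    hL.isClosed.inter (isClosed_eq (hr.continuous _) continuous_const)
  obtain ⟨c, hc⟩ := IsCompact.nonempty_iInter_of_sequence_nonempty_isCompact_isClosed K hK_succ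
    hxL (hL.of_isClosed_subset (hK_closed 0) inter_subset_left) hK_closed
  simp only [mem_iInter] at hc
  have hc_eq : r t c = r t x := tendsto_nhds_unique ((hlim c).congr fun n => (hc n).2) (hlim x)
  rw [← hc_eq, hr.apply_eq_self_of_mem_range (hc 0).1.2]
  exact (hc 0).1.1

open TopologicalSpace in
theorem prodMap (hr : IsRetractionalSkeleton r) :
    IsRetractionalSkeleton fun s => Prod.map (r s) (r s) where
  nonempty := hr.nonempty
  directed := hr.directed
  continuous s := (hr.continuous s).prodMap (hr.continuous s)
  retraction s := by rw [Prod.map_comp_map, hr.retraction]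
  compact_range s := range_prodMap ▸ (hr.compact_range s).prod (hr.compact_range s)
  metrizable_range s := by
    have := hr.metrizable_range s
    rw [range_prodMap]
    exact (Homeomorph.Set.prod _ _).isEmbedding.metrizableSpace
  comp_eq_of_le s t hst := by
    simp only [Prod.map_comp_map, (hr.comp_eq_of_le s t hst).1, (hr.comp_eq_of_le s t hst).2,
      and_self]
  seq_sup u hu := by
    obtain ⟨t, ht, hlim⟩ := hr.seq_sup u hu
    exact ⟨t, ht, fun x => (hlim x.1).prodMk_nhds (hlim x.2)⟩
  tendsto_id x := (hr.tendsto_id x.1).prodMk_nhds (hr.tendsto_id x.2)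

theorem exists_mem_range_prodMap (hr : IsRetractionalSkeleton r) (hfull : ∀ x, ∃ s, x ∈ range (r s))
    (p : X × X) : ∃ s, p ∈ range (Prod.map (r s) (r s)) := by
  obtain ⟨s₁, hs₁⟩ := hfull p.1
  obtain ⟨s₂, hs₂⟩ := hfull p.2
  obtain ⟨s, h₁, h₂⟩ := hr.directed s₁ s₂
  exact ⟨s, range_prodMap ▸ ⟨hr.range_mono h₁ hs₁, hr.range_mono h₂ hs₂⟩⟩

end IsRetractionalSkeleton

section QuotientRetraction

variable {X Y Γ : Type*} {r : Γ → X → X} {f : X → Y}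

noncomputable def quotientRetraction (hf : Function.Surjective f) (r : Γ → X → X)
    (t : {t : Γ // Function.FactorsThrough (f ∘ r t) f}) (y : Y) : Y :=
  f (r t (Function.surjInv hf y))

variable (hf : Function.Surjective f) (t : {t : Γ // Function.FactorsThrough (f ∘ r t) f})

@[simp]
theorem quotientRetraction_apply (x : X) : quotientRetraction hf r t (f x) = f (r t x) :=
  t.2 (Function.surjInv_eq hf (f x))

theorem quotientRetraction_comp : quotientRetraction hf r t ∘ f = f ∘ r t :=
  funext (quotientRetraction_apply hf t)

theorem range_quotientRetraction : range (quotientRetraction hf r t) = f '' range (r t) := by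
  rw [← hf.range_comp, quotientRetraction_comp, range_comp]

theorem Topology.IsQuotientMap.continuous_quotientRetraction [TopologicalSpace X]
    [TopologicalSpace Y] (hq : IsQuotientMap f) (hr : Continuous (r t)) :
    Continuous (quotientRetraction hq.surjective r t) := by
  rw [hq.continuous_iff, quotientRetraction_comp]
  exact hq.continuous.comp hr

end QuotientRetraction

namespace IsRetractionalSkeleton

variable {X Y : Type u} [TopologicalSpace X] [TopologicalSpace Y] [T2Space X] [T2Space Y]
  {Γ : Type u} [PartialOrder Γ] {r : Γ → X → X} {f : X → Y}

theorem exists_ge_factorsThrough (hr : IsRetractionalSkeleton r)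
    (hfull : ∀ x, ∃ s, x ∈ range (r s)) (hf : Continuous f) (s : Γ) :
    ∃ t, s ≤ t ∧ Function.FactorsThrough (f ∘ r t) f := by
  obtain ⟨t, hst, ht⟩ := hr.prodMap.exists_ge_mapsTo (hr.exists_mem_range_prodMap hfull)
    (isClosed_eq (hf.comp continuous_fst) (hf.comp continuous_snd)) s
  exact ⟨t, hst, fun x x' h => ht (x := (x, x')) h⟩

theorem quotient (hr : IsRetractionalSkeleton r) (hfull : ∀ x, ∃ s, x ∈ range (r s))
    (hf : IsQuotientMap f) : IsRetractionalSkeleton (quotientRetraction hf.surjective r) := by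
  have hcof := hr.exists_ge_factorsThrough hfull hf.continuous
  have hsurj := hf.surjective
  refine
  { nonempty := ?_
    directed := ?_
    continuous := fun t => hf.continuous_quotientRetraction t (hr.continuous t)
    retraction := fun t => funext <| hsurj.forall.2 fun x => by
      simp [hr.apply_apply_of_le le_rfl]
    compact_range := fun t => range_quotientRetraction hsurj t ▸
      (hr.compact_range t).image hf.continuous
    metrizable_range := fun t => by
      have := hr.metrizable_range t
      rw [range_quotientRetraction]
      exact (hr.compact_range t).metrizableSpace_image hf.continuous
    comp_eq_of_le := fun s t hst =>
      ⟨funext <| hsurj.forall.2 fun x => by simp [hr.apply_apply_of_le' hst],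
        funext <| hsurj.forall.2 fun x => by simp [hr.apply_apply_of_le hst]⟩
    seq_sup := ?_
    tendsto_id := ?_ }
  · obtain ⟨s⟩ := hr.nonempty
    obtain ⟨t, -, ht⟩ := hcof s
    exact ⟨⟨t, ht⟩⟩
  · intro s t
    obtain ⟨w, hsw, htw⟩ := hr.directed s t
    obtain ⟨w', hww', hw'⟩ := hcof w
    exact ⟨⟨w', hw'⟩, hsw.trans hww', htw.trans hww'⟩
  · intro u hu
    obtain ⟨t, ht, hlim⟩ := hr.seq_sup (Subtype.val ∘ u) ((Subtype.mono_coe _).comp hu)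
    have hlimf (x : X) := (hf.continuous.tendsto _).comp (hlim x)
    have hft : Function.FactorsThrough (f ∘ r t) f := fun x x' h =>
      tendsto_nhds_unique (hlimf x) ((hlimf x').congr fun n => ((u n).2 h).symm)
    refine ⟨⟨t, hft⟩, IsLUB.of_image Subtype.coe_le_coe (by rwa [← range_comp]), ?_⟩
    refine hsurj.forall.2 fun x => ?_
    simp only [quotientRetraction_apply]
    exact hlimf x
  · refine hsurj.forall.2 fun x => ?_
    have hval : Tendsto (fun t : {t // Function.FactorsThrough (f ∘ r t) f} => t.1) atTop atTop :=
      tendsto_atTop_atTop_of_monotone (Subtype.mono_coe _) fun s =>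
        let ⟨t, hst, ht⟩ := hcof s; ⟨⟨t, ht⟩, hst⟩
    simp only [quotientRetraction_apply]
    exact (hf.continuous.tendsto x).comp ((hr.tendsto_id x).comp hval)

theorem exists_mem_range_quotientRetraction (hr : IsRetractionalSkeleton r)
    (hfull : ∀ x, ∃ s, x ∈ range (r s)) (hf : IsQuotientMap f) (y : Y) :
    ∃ t, y ∈ range (quotientRetraction hf.surjective r t) := by
  obtain ⟨x, rfl⟩ := hf.surjective y
  obtain ⟨s, hs⟩ := hfull x
  obtain ⟨t, hst, ht⟩ := hr.exists_ge_factorsThrough hfull hf.continuous s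
  refine ⟨⟨t, ht⟩, f x, ?_⟩
  rw [quotientRetraction_apply, hr.apply_eq_self_of_mem_range (hr.range_mono hst hs)]

end IsRetractionalSkeleton

theorem HasFullRetractionalSkeleton.of_isQuotientMap {X Y : Type u} [TopologicalSpace X]
    [TopologicalSpace Y] [T2Space X] [T2Space Y] (hX : HasFullRetractionalSkeleton X)
    {f : X → Y} (hf : IsQuotientMap f) : HasFullRetractionalSkeleton Y := by
  obtain ⟨Γ, _, r, hr, hfull⟩ := hX
  exact ⟨_, inferInstance, _, hr.quotient hfull hf,
    hr.exists_mem_range_quotientRetraction hfull hf⟩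

theorem CountablyCompact.of_surjective {X Y : Type u} [TopologicalSpace X] [TopologicalSpace Y]
    (hX : CountablyCompact X) {f : X → Y} (hf : Continuous f) (hsurj : Function.Surjective f) :
    CountablyCompact Y := by
  intro U hU hcover
  obtain ⟨t, ht⟩ := hX (fun n => f ⁻¹' U n) (fun n => (hU n).preimage hf)
    (by rw [← preimage_iUnion, hcover, preimage_univ])
  refine ⟨t, hsurj.preimage_injective ?_⟩
  simpa only [preimage_iUnion, preimage_univ] using ht

theorem quotient_of_ncCorson_general
    {X Y : Type u} [TopologicalSpace X] [T2Space X]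
    [TopologicalSpace Y] [T2Space Y]
    (hX : IsNCCorson X) (f : X → Y) (hf : Topology.IsQuotientMap f) :
    IsNCCorson Y :=
  ⟨hX.1.of_surjective hf.continuous hf.surjective, hX.2.of_isQuotientMap hf⟩

/-- A quotient image of a non-commutative Corson countably compact space
(into a Hausdorff completely regular space) is non-commutative Corson countably compact. -/
theorem quotient_of_ncCorson
    {X Y : Type u} [TopologicalSpace X] [T2Space X] [CompletelyRegularSpace X]
    [TopologicalSpace Y] [T2Space Y] [CompletelyRegularSpace Y]
    (hX : IsNCCorson X) (f : X → Y) (hf : Topology.IsQuotientMap f) :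
    IsNCCorson Y :=
  quotient_of_ncCorson_general hX f hf
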